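/- Let C be a dyadic cell at level j. The number of dyadic cells Z at level j for which there exists an axis-aligned square ρ with storing cell Z and ρ ∩ C ≠ ∅ is at most 25. -/
import Mathlib


open Set

/-- A dyadic cell at level `level` (side length `2^level`) with lower-left corner
`(a·2^level, b·2^level)`. -/
structure DyadicCell where
  level : ℤ
  a : ℤ
  b : ℤ
deriving DecidableEq

/-- The side length of a dyadic cell. -/
noncomputable def DyadicCell.side (C : DyadicCell) : ℝ := 2 ^ C.level

/-- The dyadic cell as a subset of the plane. -/
noncomputable def DyadicCell.toSet (C : DyadicCell) : Set (ℝ × ℝ) :=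
  Set.Icc ((C.a : ℝ) * 2 ^ C.level) ((C.a + 1 : ℝ) * 2 ^ C.level) ×ˢ
    Set.Icc ((C.b : ℝ) * 2 ^ C.level) ((C.b + 1 : ℝ) * 2 ^ C.level)

/-- `5C`: the square obtained by scaling the cell `C` by a factor `5` about its center. -/
noncomputable def DyadicCell.scale5 (C : DyadicCell) : Set (ℝ × ℝ) :=
  Set.Icc ((C.a - 2 : ℝ) * 2 ^ C.level) ((C.a + 3 : ℝ) * 2 ^ C.level) ×ˢ
    Set.Icc ((C.b - 2 : ℝ) * 2 ^ C.level) ((C.b + 3 : ℝ) * 2 ^ C.level)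

/-- An axis-aligned square `[x, x+s] × [y, y+s]` of side length `s > 0`. -/
structure Square where
  x : ℝ
  y : ℝ
  s : ℝ
  s_pos : 0 < s

/-- The square as a subset of the plane. -/
noncomputable def Square.toSet (σ : Square) : Set (ℝ × ℝ) :=
  Set.Icc σ.x (σ.x + σ.s) ×ˢ Set.Icc σ.y (σ.y + σ.s)

/-- The center of a square. -/
noncomputable def Square.center (σ : Square) : ℝ × ℝ := (σ.x + σ.s / 2, σ.y + σ.s / 2)

/-- `C` is a storing cell of `σ`: a dyadic cell of maximal side length among those that
contain the center of `σ` and are contained in `σ`. -/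
def IsStoringCell (σ : Square) (C : DyadicCell) : Prop :=
  σ.center ∈ C.toSet ∧ C.toSet ⊆ σ.toSet ∧
    ∀ D : DyadicCell, σ.center ∈ D.toSet → D.toSet ⊆ σ.toSet → D.side ≤ C.side

lemma storing_side_lt (σ : Square) (Z : DyadicCell) (h : IsStoringCell σ Z) :
    σ.s < 4 * 2 ^ Z.level := by
  by_contra hcon
  push_neg at hcon
  set ℓ := Z.level
  have hpow : (0:ℝ) < 2 ^ ℓ := zpow_pos (by norm_num) _
  set h2 : ℝ := 2 ^ (ℓ + 1) with hh2
  have h2eq : h2 = 2 ^ ℓ * 2 := by rw [hh2, zpow_add_one₀ (by norm_num : (2:ℝ) ≠ 0)]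
  have h2pos : (0:ℝ) < h2 := zpow_pos (by norm_num) _
  set c1 := σ.x + σ.s / 2
  set c2 := σ.y + σ.s / 2
  set D : DyadicCell := ⟨ℓ + 1, ⌊c1 / h2⌋, ⌊c2 / h2⌋⟩ with hD
  have hfl₁ : (⌊c1 / h2⌋ : ℝ) * h2 ≤ c1 := by
    rw [← le_div_iff₀ h2pos]; exact Int.floor_le _
  have hfu₁ : c1 ≤ ((⌊c1 / h2⌋ : ℝ) + 1) * h2 := by
    rw [← div_le_iff₀ h2pos]; exact le_of_lt (Int.lt_floor_add_one _)
  have hfl₂ : (⌊c2 / h2⌋ : ℝ) * h2 ≤ c2 := by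
    rw [← le_div_iff₀ h2pos]; exact Int.floor_le _
  have hfu₂ : c2 ≤ ((⌊c2 / h2⌋ : ℝ) + 1) * h2 := by
    rw [← div_le_iff₀ h2pos]; exact le_of_lt (Int.lt_floor_add_one _)
  have hflow₁ : c1 - h2 ≤ (⌊c1 / h2⌋ : ℝ) * h2 := by
    have := (Int.sub_one_lt_floor (c1 / h2)).le
    calc c1 - h2 = (c1 / h2 - 1) * h2 := by field_simp
    _ ≤ (⌊c1 / h2⌋ : ℝ) * h2 := by nlinarith
  have hflow₂ : c2 - h2 ≤ (⌊c2 / h2⌋ : ℝ) * h2 := by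
    have := (Int.sub_one_lt_floor (c2 / h2)).le
    calc c2 - h2 = (c2 / h2 - 1) * h2 := by field_simp
    _ ≤ (⌊c2 / h2⌋ : ℝ) * h2 := by nlinarith
  have hfhi₁ : ((⌊c1 / h2⌋ : ℝ) + 1) * h2 ≤ c1 + h2 := by nlinarith
  have hfhi₂ : ((⌊c2 / h2⌋ : ℝ) + 1) * h2 ≤ c2 + h2 := by nlinarith
  have hh2s : h2 ≤ σ.s / 2 := by rw [h2eq]; linarith
  have hmem : σ.center ∈ D.toSet := by
    constructor
    · exact ⟨hfl₁, by push_cast; exact hfu₁⟩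
    · exact ⟨hfl₂, by push_cast; exact hfu₂⟩
  have hsubs : D.toSet ⊆ σ.toSet := by
    apply Set.prod_mono <;> apply Set.Icc_subset_Icc
    · calc σ.x ≤ c1 - h2 := by simp only [c1]; linarith
      _ ≤ _ := hflow₁
    · push_cast
      calc ((⌊c1 / h2⌋ : ℝ) + 1) * h2 ≤ c1 + h2 := hfhi₁
      _ ≤ σ.x + σ.s := by simp only [c1]; linarith
    · calc σ.y ≤ c2 - h2 := by simp only [c2]; linarith
      _ ≤ _ := hflow₂
    · push_cast
      calc ((⌊c2 / h2⌋ : ℝ) + 1) * h2 ≤ c2 + h2 := hfhi₂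
      _ ≤ σ.y + σ.s := by simp only [c2]; linarith
  have := h.2.2 D hmem hsubs
  rw [DyadicCell.side, DyadicCell.side] at this
  have : h2 ≤ 2 ^ ℓ := this
  rw [h2eq] at this
  linarith

lemma key1d (ℓ : ℤ) (za ca : ℤ) (x s p : ℝ) (hslt : s < 4 * 2 ^ ℓ)
    (hc : x + s / 2 ∈ Set.Icc ((za : ℝ) * 2 ^ ℓ) ((za + 1 : ℝ) * 2 ^ ℓ))
    (hp1 : p ∈ Set.Icc x (x + s))
    (hp2 : p ∈ Set.Icc ((ca : ℝ) * 2 ^ ℓ) ((ca + 1 : ℝ) * 2 ^ ℓ)) :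
    za ∈ Finset.Icc (ca - 2) (ca + 2) := by
  have hpow : (0:ℝ) < 2 ^ ℓ := zpow_pos (by norm_num) _
  obtain ⟨hc1, hc2⟩ := hc
  obtain ⟨hp1l, hp1u⟩ := hp1
  obtain ⟨hp2l, hp2u⟩ := hp2
  have h1 : ((za : ℝ) - 2) * 2 ^ ℓ < ((ca : ℝ) + 1) * 2 ^ ℓ := by nlinarith
  have h2 : (ca : ℝ) * 2 ^ ℓ < ((za : ℝ) + 3) * 2 ^ ℓ := by nlinarith
  have h1' : (za : ℝ) - 2 < (ca : ℝ) + 1 := by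
    have := mul_lt_mul_of_pos_right (lt_of_mul_lt_mul_right h1 hpow.le) hpow
    exact lt_of_mul_lt_mul_right h1 hpow.le
  have h2' : (ca : ℝ) < (za : ℝ) + 3 := lt_of_mul_lt_mul_right h2 hpow.le
  rw [Finset.mem_Icc]
  constructor
  · have : (ca : ℝ) - 2 < (za : ℝ) + 1 := by linarith
    exact_mod_cast Int.lt_add_one_iff.mp (by exact_mod_cast this)
  · have : (za : ℝ) < (ca : ℝ) + 2 + 1 := by linarith
    exact_mod_cast Int.lt_add_one_iff.mp (by exact_mod_cast this)

theorem statement6 (C : DyadicCell) :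
    {Z : DyadicCell | Z.level = C.level ∧
      ∃ ρ : Square, IsStoringCell ρ Z ∧ (ρ.toSet ∩ C.toSet).Nonempty}.encard ≤ 25 := by
  classical
  have hsub : {Z : DyadicCell | Z.level = C.level ∧
      ∃ ρ : Square, IsStoringCell ρ Z ∧ (ρ.toSet ∩ C.toSet).Nonempty} ⊆
      ↑((Finset.Icc (C.a - 2) (C.a + 2) ×ˢ Finset.Icc (C.b - 2) (C.b + 2)).image
        fun p => DyadicCell.mk C.level p.1 p.2) := by
    rintro Z ⟨hlev, ρ, hstore, p, hpρ, hpC⟩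
    have hslt : ρ.s < 4 * 2 ^ C.level := hlev ▸ storing_side_lt ρ Z hstore
    have hcenter := hstore.1
    rw [DyadicCell.toSet, hlev] at hcenter
    obtain ⟨hc1, hc2⟩ := hcenter
    rw [Square.toSet] at hpρ
    rw [DyadicCell.toSet] at hpC
    have ha : Z.a ∈ Finset.Icc (C.a - 2) (C.a + 2) :=
      key1d C.level Z.a C.a ρ.x ρ.s p.1 hslt hc1 hpρ.1 hpC.1
    have hb : Z.b ∈ Finset.Icc (C.b - 2) (C.b + 2) :=
      key1d C.level Z.b C.b ρ.y ρ.s p.2 hslt hc2 hpρ.2 hpC.2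
    simp only [Finset.coe_image, Set.mem_image, Finset.mem_coe, Finset.mem_product]
    exact ⟨(Z.a, Z.b), ⟨ha, hb⟩, by cases Z; simp_all⟩
  calc _ ≤ _ := Set.encard_le_encard hsub
  _ = (((Finset.Icc (C.a - 2) (C.a + 2) ×ˢ Finset.Icc (C.b - 2) (C.b + 2)).image
        fun p => DyadicCell.mk C.level p.1 p.2).card : ℕ∞) :=
      Set.encard_coe_eq_coe_finsetCard _
  _ ≤ 25 := by
      have h1 := Finset.card_image_le (f := fun p : ℤ × ℤ => DyadicCell.mk C.level p.1 p.2)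
        (s := Finset.Icc (C.a - 2) (C.a + 2) ×ˢ Finset.Icc (C.b - 2) (C.b + 2))
      have h2 : (Finset.Icc (C.a - 2) (C.a + 2) ×ˢ Finset.Icc (C.b - 2) (C.b + 2)).card = 25 := by
        rw [Finset.card_product, Int.card_Icc, Int.card_Icc,
          (by ring : C.a + 2 + 1 - (C.a - 2) = 5), (by ring : C.b + 2 + 1 - (C.b - 2) = 5)]
        rfl
      rw [h2] at h1
      exact_mod_cast h1
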